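/- Let D be a triangulated category with a bounded t-structure (D^{≤0}, D^{≥0}), and let F : D → D be a triangulated endofunctor such that F(D^{≤0}) ⊆ D^{≤0} and F(D^{≥0}) ⊆ D^{≥-1}. Then the full subcategory ker(F) = {X ∈ D : F(X) ≅ 0} is stable under the truncation functors τ_{≤0} and τ_{≥0}; in particular the t-structure on D restricts to a t-structure on ker(F). -/

import Mathlib

open CategoryTheory Limits Pretriangulated Triangulated

namespace CategoryTheory.Triangulated.TStructure

variable {C : Type*} [Category C] [Preadditive C] [HasZeroObject C] [HasShift C ℤ]
  [∀ n : ℤ, (shiftFunctor C n).Additive] [Pretriangulated C] (t : TStructure C)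

lemma ge_map_obj_sub_one_of_ge (F : C ⥤ C) [F.CommShift ℤ]
    (hF : ∀ X : C, t.ge 0 X → t.ge (-1) (F.obj X)) (n : ℤ) (X : C) (hX : t.ge n X) :
    t.ge (n - 1) (F.obj X) := by
  have hFXn : t.ge (-1) ((F.obj X)⟦n⟧) :=
    (t.ge (-1)).prop_of_iso ((F.commShiftIso n).app X) (hF _ (t.ge_shift n n 0 (by omega) X hX))
  rwa [← t.shift_ge n (-1) (n - 1) (by omega)]

lemma isZero_obj₃_of_isZero_obj₂_of_le_of_ge {T : Triangle C} (hT : T ∈ distTriang C)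
    (h₂ : IsZero T.obj₂) (n : ℤ) (h₁ : t.le n T.obj₁) (h₃ : t.ge n T.obj₃) : IsZero T.obj₃ := by
  have : IsIso T.mor₃ := (Triangle.isZero₂_iff_isIso₃ T hT).1 h₂
  have : t.IsLE T.obj₃ (n - 1) :=
    ⟨(t.le (n - 1)).prop_of_iso (asIso T.mor₃).symm (t.le_shift n 1 (n - 1) (by omega) _ h₁)⟩
  have : t.IsGE T.obj₃ n := ⟨h₃⟩
  exact t.isZero _ (n - 1) n

end CategoryTheory.Triangulated.TStructure

/-- If `F` is a triangulated endofunctor of a triangulated category with a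
t-structure such that `F(D^{≤0}) ⊆ D^{≤0}` and `F(D^{≥0}) ⊆ D^{≥-1}`, then the kernel of `F`
is stable under the truncation functors: for any truncation distinguished triangle
`A → X → B → A[1]` with `A ∈ D^{≤0}` and `B ∈ D^{≥1}`, if `F X ≅ 0` then `F A ≅ 0` and
`F B ≅ 0`; in particular the t-structure restricts to `ker F`. -/
theorem stmt0 {C : Type*} [Category C] [Preadditive C] [HasZeroObject C]
    [HasShift C ℤ] [∀ n : ℤ, (shiftFunctor C n).Additive] [Pretriangulated C]
    (t : TStructure C)
    (F : C ⥤ C) [F.CommShift ℤ] [F.IsTriangulated]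
    (hF_le : ∀ X : C, t.le 0 X → t.le 0 (F.obj X))
    (hF_ge : ∀ X : C, t.ge 0 X → t.ge (-1) (F.obj X))
    (X A B : C) (f : A ⟶ X) (g : X ⟶ B) (h : B ⟶ A⟦(1 : ℤ)⟧)
    (hT : Triangle.mk f g h ∈ distTriang C)
    (hA : t.le 0 A) (hB : t.ge 1 B)
    (hX : IsZero (F.obj X)) :
    IsZero (F.obj A) ∧ IsZero (F.obj B) := by
  have hFT := F.map_distinguished _ hT
  have hFB : IsZero (F.obj B) :=
    t.isZero_obj₃_of_isZero_obj₂_of_le_of_ge hFT hX 0 (hF_le A hA)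
      (t.ge_map_obj_sub_one_of_ge F hF_ge 1 B hB)
  exact ⟨Triangle.isZero₁_of_isZero₂₃ _ hFT hX hFB, hFB⟩
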